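/- arXiv:2408.08393 — 2 statements merged into one kernel-verified Lean document; each statement's English description precedes it below -/
import Mathlib

section
/- Let G be a finite connected simple graph and L a list assignment with |L(v)| ≥ deg(v) for every vertex v. If some vertex u satisfies |L(u)| ≥ deg(u) + 1, then G has a proper L-coloring. -/
/-!
Every nonempty set `t` of vertices contains a vertex with fewer neighbours in `t` than colours
in its list: `u` if `t` is everything, and otherwise, by connectivity, a vertex of `t` adjacent
to a vertex outside `t`. Colour greedily: remove such a vertex, colour the rest, and give the
removed vertex a colour of its list not used on its neighbours.
-/

open Finset

namespace SimpleGraph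

variable {V : Type*}

theorem exists_listColoring_on_of_forall_exists_card_lt {α : Type*} [Nonempty α]
    (G : SimpleGraph V) [DecidableRel G.Adj] (L : V → Finset α) (s : Finset V)
    (h : ∀ t ⊆ s, t.Nonempty → ∃ v ∈ t, #{w ∈ t | G.Adj v w} < #(L v)) :
    ∃ φ : V → α, (∀ v ∈ s, φ v ∈ L v) ∧ ∀ a ∈ s, ∀ b ∈ s, G.Adj a b → φ a ≠ φ b := by
  classical
  induction s using Finset.strongInduction with
  | H s ih =>
  rcases s.eq_empty_or_nonempty with rfl | hs
  · exact ⟨fun _ => Classical.arbitrary α, by simp, by simp⟩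
  obtain ⟨v, hv, hcard⟩ := h s Subset.rfl hs
  obtain ⟨φ, hφL, hφadj⟩ :=
    ih (s.erase v) (erase_ssubset hv) fun t ht => h t (ht.trans (erase_subset v s))
  obtain ⟨c, hcL, hcφ⟩ : ∃ c ∈ L v, c ∉ image φ {w ∈ s | G.Adj v w} :=
    exists_mem_notMem_of_card_lt_card (card_image_le.trans_lt hcard)
  have hc : ∀ b ∈ s, G.Adj v b → c ≠ φ b := fun b hb hvb hcb =>
    hcφ (mem_image.2 ⟨b, mem_filter.2 ⟨hb, hvb⟩, hcb.symm⟩)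
  refine ⟨Function.update φ v c, fun w hw => ?_, fun a ha b hb hab => ?_⟩
  · rcases eq_or_ne w v with rfl | hwv
    · simpa
    · simpa [hwv] using hφL w (mem_erase.2 ⟨hwv, hw⟩)
  · by_cases hav : a = v <;> by_cases hbv : b = v
    · exact absurd (hav ▸ hbv ▸ hab) G.irrefl
    · simpa [hav, hbv] using hc b hb (hav ▸ hab)
    · simpa [hav, hbv] using (hc a ha (hbv ▸ hab.symm)).symm
    · simpa [hav, hbv] using hφadj a (mem_erase.2 ⟨hav, ha⟩) b (mem_erase.2 ⟨hbv, hb⟩) hab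

theorem Connected.exists_adj_of_mem_of_notMem {G : SimpleGraph V} (hG : G.Connected)
    {s : Set V} {a b : V} (ha : a ∈ s) (hb : b ∉ s) : ∃ v ∈ s, ∃ x ∉ s, G.Adj v x := by
  obtain ⟨d, -, hd, hd'⟩ := (hG a b).some.exists_boundary_dart s ha hb
  exact ⟨d.fst, hd, d.snd, hd', d.adj⟩

end SimpleGraph

/-- Erdős–Rubin–Taylor (easy direction): a connected graph with lists of size
at least the degrees, one of which is strictly larger, is `L`-colorable. -/
theorem stmt_4 {V : Type*} [Fintype V] (G : SimpleGraph V) [DecidableRel G.Adj]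
    (hconn : G.Connected) (L : V → Finset ℕ)
    (hL : ∀ v, G.degree v ≤ (L v).card)
    (u : V) (hu : G.degree u + 1 ≤ (L u).card) :
    ∃ φ : V → ℕ, (∀ v, φ v ∈ L v) ∧ ∀ a b, G.Adj a b → φ a ≠ φ b := by
  classical
  suffices h : ∀ t : Finset V, t.Nonempty → ∃ v ∈ t, #{w ∈ t | G.Adj v w} < #(L v) by
    obtain ⟨φ, hφL, hφadj⟩ :=
      G.exists_listColoring_on_of_forall_exists_card_lt L univ fun t _ => h t
    exact ⟨φ, fun v => hφL v (mem_univ v), fun a b => hφadj a (mem_univ a) b (mem_univ b)⟩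
  intro t ht
  have hsub : ∀ v, {w ∈ t | G.Adj v w} ⊆ G.neighborFinset v := fun v w hw => by
    simpa using (mem_filter.1 hw).2
  rcases eq_or_ne t univ with rfl | ht'
  · exact ⟨u, mem_univ u, (card_le_card (hsub u)).trans_lt (by simpa using hu)⟩
  obtain ⟨a, ha⟩ := ht
  obtain ⟨b, hb⟩ : ∃ b, b ∉ t := by simpa [eq_univ_iff_forall] using ht'
  obtain ⟨v, hv, x, hx, hvx⟩ := hconn.exists_adj_of_mem_of_notMem (s := ↑t) ha hb
  have hssub : {w ∈ t | G.Adj v w} ⊂ G.neighborFinset v :=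
    (ssubset_iff_of_subset (hsub v)).2 ⟨x, by simpa using hvx, fun hx' => hx (mem_filter.1 hx').1⟩
  exact ⟨v, hv, (card_lt_card hssub).trans_le (by simpa using hL v)⟩
end

section
/- Let H be a finite simple graph with at most b vertices, let k ≥ 3, and let f: V(H) → ℤ with f(v) ≤ k for every v. Suppose that for every list assignment L with |L(v)| = max(0, f(v)): (FIX') for each vertex v and c ∈ L(v) there is a proper L-coloring assigning c to v, and (FORB-t) for t = k−2: for every t-tuple of vertices v_1,...,v_t and color c, there is a proper L-coloring avoiding c at all v_i. Then for every such L-assignment there exists a probability distribution on proper L-colorings φ of H satisfying: (FIX) for each v and c ∈ L(v), P(φ(v) = c) ≥ k^{−b}; and (FORB) for each set U of at most k−2 vertices and each color c, P(φ(u) ≠ c for all u ∈ U) ≥ k^{−b}. -/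
/-- Weak reductivity implies quantitative reductivity with constant `k^{-b}`:
if a graph on at most `b` vertices satisfies (FIX') and (FORB-(k-2)) for an
`f`-assignment `L`, then there is a distribution on proper `L`-colorings
satisfying (FIX) and (FORB) with probability constant `k^{-b}`. -/
theorem stmt_6 {V : Type*} [Fintype V] [DecidableEq V] (H : SimpleGraph V) (b k : ℕ)
    (hb : Fintype.card V ≤ b) (hk : 3 ≤ k) (f : V → ℤ) (hf : ∀ v, f v ≤ (k : ℤ))
    (L : V → Finset ℕ) (hL : ∀ v, ((L v).card : ℤ) = max 0 (f v))
    (hFIX : ∀ v, ∀ c ∈ L v, ∃ φ : V → ℕ,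
      (∀ u, φ u ∈ L u) ∧ (∀ u u', H.Adj u u' → φ u ≠ φ u') ∧ φ v = c)
    (hFORB : ∀ (vs : Fin (k - 2) → V) (c : ℕ), ∃ φ : V → ℕ,
      (∀ u, φ u ∈ L u) ∧ (∀ u u', H.Adj u u' → φ u ≠ φ u') ∧ ∀ i, φ (vs i) ≠ c) :
    ∃ (S : Finset (V → ℕ)) (q : (V → ℕ) → ℝ),
      (∀ φ ∈ S, (∀ u, φ u ∈ L u) ∧ ∀ u u', H.Adj u u' → φ u ≠ φ u') ∧
      (∀ φ, 0 ≤ q φ) ∧ (∑ φ ∈ S, q φ = 1) ∧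
      (∀ v, ∀ c ∈ L v,
        ((k : ℝ) ^ b)⁻¹ ≤ ∑ φ ∈ S.filter (fun φ => φ v = c), q φ) ∧
      (∀ U : Finset V, U.card ≤ k - 2 → ∀ c : ℕ,
        ((k : ℝ) ^ b)⁻¹ ≤ ∑ φ ∈ S.filter (fun φ => ∀ u ∈ U, φ u ≠ c), q φ) := by
  classical
  set S : Finset (V → ℕ) := (Fintype.piFinset L).filter
    (fun φ => (∀ u, φ u ∈ L u) ∧ ∀ u u', H.Adj u u' → φ u ≠ φ u') with hSdef
  have hmem : ∀ φ : V → ℕ, (∀ u, φ u ∈ L u) → (∀ u u', H.Adj u u' → φ u ≠ φ u') → φ ∈ S := by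
    intro φ h1 h2
    simp only [hSdef, Finset.mem_filter, Fintype.mem_piFinset]
    exact ⟨h1, h1, h2⟩
  have hSne : S.Nonempty := by
    by_cases hV : Nonempty V
    · obtain ⟨φ, h1, h2, _⟩ := hFORB (fun _ => Classical.arbitrary V) 0
      exact ⟨φ, hmem φ h1 h2⟩
    · have : IsEmpty V := not_nonempty_iff.mp hV
      exact ⟨fun v => isEmptyElim v, hmem _ (fun u => isEmptyElim u) (fun u => isEmptyElim u)⟩
  have hSpos : (0 : ℝ) < S.card := by exact_mod_cast Finset.card_pos.mpr hSne
  have hScard : (S.card : ℝ) ≤ (k : ℝ) ^ b := by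
    have h1 : S.card ≤ (Fintype.piFinset L).card := Finset.card_filter_le _ _
    have h2 : (Fintype.piFinset L).card = ∏ v, (L v).card := by
      simp [Fintype.card_piFinset]
    have h3 : ∀ v : V, (L v).card ≤ k := by
      intro v
      have h := hL v
      have : ((L v).card : ℤ) ≤ (k : ℤ) := by
        rw [h]
        exact max_le (by exact_mod_cast Nat.zero_le k) (hf v)
      exact_mod_cast this
    have h4 : (∏ v : V, (L v).card) ≤ ∏ _v : V, k :=
      Finset.prod_le_prod' (fun v _ => h3 v)
    have h5 : (∏ _v : V, k) = k ^ Fintype.card V := by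
      simp [Finset.prod_const, Finset.card_univ]
    have h6 : k ^ Fintype.card V ≤ k ^ b :=
      Nat.pow_le_pow_right (by omega) hb
    have : S.card ≤ k ^ b := by
      calc S.card ≤ (Fintype.piFinset L).card := h1
        _ = ∏ v, (L v).card := h2
        _ ≤ ∏ _v : V, k := h4
        _ = k ^ Fintype.card V := h5
        _ ≤ k ^ b := h6
    exact_mod_cast this
  refine ⟨S, fun _ => (S.card : ℝ)⁻¹, ?_, ?_, ?_, ?_, ?_⟩
  · intro φ hφ
    simp only [hSdef, Finset.mem_filter] at hφ
    exact hφ.2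
  · intro φ; positivity
  · rw [Finset.sum_const, nsmul_eq_mul]
    exact mul_inv_cancel₀ (ne_of_gt hSpos)
  all_goals {
    first
    | (intro v c hc
       obtain ⟨φ, h1, h2, h3⟩ := hFIX v c hc
       have hφS : φ ∈ S := hmem φ h1 h2
       have hφT : φ ∈ S.filter (fun φ => φ v = c) := Finset.mem_filter.mpr ⟨hφS, h3⟩
       have hT : (1 : ℝ) ≤ (S.filter (fun φ => φ v = c)).card := by
         exact_mod_cast Finset.card_pos.mpr ⟨φ, hφT⟩
       rw [Finset.sum_const, nsmul_eq_mul]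
       calc ((k : ℝ) ^ b)⁻¹ ≤ (S.card : ℝ)⁻¹ := by
              apply inv_anti₀ hSpos hScard
         _ ≤ (S.filter (fun φ => φ v = c)).card * (S.card : ℝ)⁻¹ :=
              le_mul_of_one_le_left (by positivity) hT)
    | (intro U hU c
       have exmem : ∃ φ ∈ S, ∀ u ∈ U, φ u ≠ c := by
         rcases U.eq_empty_or_nonempty with rfl | ⟨u0, hu0⟩
         · obtain ⟨φ, hφ⟩ := hSne
           exact ⟨φ, hφ, by simp⟩
         · have hlen : U.toList.length ≤ k - 2 := by
             rw [Finset.length_toList]; exact hU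
           obtain ⟨φ, h1, h2, h3⟩ := hFORB
             (fun i => if h : (i : ℕ) < U.toList.length then U.toList.get ⟨i, h⟩ else u0) c
           refine ⟨φ, hmem φ h1 h2, ?_⟩
           intro u hu
           obtain ⟨j, hjeq⟩ := List.mem_iff_get.mp (Finset.mem_toList.mpr hu)
           have hjk : (j : ℕ) < k - 2 := lt_of_lt_of_le j.isLt hlen
           have h4 := h3 ⟨j, hjk⟩
           rw [dif_pos (show ((⟨j, hjk⟩ : Fin (k-2)) : ℕ) < U.toList.length from j.isLt)] at h4
           exact hjeq ▸ h4
       obtain ⟨φ, hφS, hφP⟩ := exmem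
       have hφT : φ ∈ S.filter (fun φ => ∀ u ∈ U, φ u ≠ c) :=
         Finset.mem_filter.mpr ⟨hφS, hφP⟩
       have hT : (1 : ℝ) ≤ (S.filter (fun φ => ∀ u ∈ U, φ u ≠ c)).card := by
         exact_mod_cast Finset.card_pos.mpr ⟨φ, hφT⟩
       rw [Finset.sum_const, nsmul_eq_mul]
       calc ((k : ℝ) ^ b)⁻¹ ≤ (S.card : ℝ)⁻¹ := by
              apply inv_anti₀ hSpos hScard
         _ ≤ (S.filter (fun φ => ∀ u ∈ U, φ u ≠ c)).card * (S.card : ℝ)⁻¹ :=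
              le_mul_of_one_le_left (by positivity) hT)
  }
end
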